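/- For fixed γ > 0 and A > 0, the function ω ↦ log(1+ω) − ω + (1+ω)·γ on ω ∈ [0,∞) attains its maximum uniquely at ω = γ/(1−γ) when γ < 1; more generally, for the Lagrange-dual term L(ω) = log(1+ω) − ω + (1+ω)·s/(s+t) with s ≥ 0, t > 0, the maximizer over ω ≥ 0 is ω* = s/t, and the maximal value equals log(1 + s/t). -/
import Mathlib


/-- Lagrangian dual transform identity: for signal power `s ≥ 0` and
interference-plus-noise power `t > 0`, the dual term
`L(ω) = log(1+ω) − ω + (1+ω)·s/(s+t)` is uniquely maximized over `ω ≥ 0`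
at `ω* = s/t`, with maximal value `log(1 + s/t)`. -/
theorem lagrange_dual_transform_maximizer (s t : ℝ) (hs : 0 ≤ s) (ht : 0 < t) :
    (∀ ω : ℝ, 0 ≤ ω →
        Real.log (1 + ω) - ω + (1 + ω) * s / (s + t) ≤
        Real.log (1 + s / t) - s / t + (1 + s / t) * s / (s + t)) ∧
    (∀ ω : ℝ, 0 ≤ ω → ω ≠ s / t →
        Real.log (1 + ω) - ω + (1 + ω) * s / (s + t) <
        Real.log (1 + s / t) - s / t + (1 + s / t) * s / (s + t)) ∧
    Real.log (1 + s / t) - s / t + (1 + s / t) * s / (s + t) =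
      Real.log (1 + s / t) := by
  have ht' : t ≠ 0 := ne_of_gt ht
  have hst : 0 < s + t := by linarith
  have hst' : s + t ≠ 0 := ne_of_gt hst
  have hw : 0 ≤ s / t := div_nonneg hs ht.le
  have h1w : 0 < 1 + s / t := by linarith
  have key3 : Real.log (1 + s / t) - s / t + (1 + s / t) * s / (s + t) =
      Real.log (1 + s / t) := by
    field_simp
    ring
  refine ⟨?_, ?_, key3⟩
  · intro ω hω
    have h1ω : 0 < 1 + ω := by linarith
    have hx : 0 < (1 + ω) / (1 + s / t) := div_pos h1ω h1w
    have hlog := Real.log_le_sub_one_of_pos hx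
    rw [Real.log_div (ne_of_gt h1ω) (ne_of_gt h1w)] at hlog
    rw [key3]
    have heq : (1 + ω) / (1 + s / t) - 1 = ω - (1 + ω) * s / (s + t) := by
      field_simp
      ring
    linarith [heq ▸ hlog]
  · intro ω hω hne
    have h1ω : 0 < 1 + ω := by linarith
    have hx : 0 < (1 + ω) / (1 + s / t) := div_pos h1ω h1w
    have hx1 : (1 + ω) / (1 + s / t) ≠ 1 := by
      intro h
      have := (div_eq_one_iff_eq (ne_of_gt h1w)).mp h
      exact hne (by linarith)
    have hlog := Real.log_lt_sub_one_of_pos hx hx1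
    rw [Real.log_div (ne_of_gt h1ω) (ne_of_gt h1w)] at hlog
    rw [key3]
    have heq : (1 + ω) / (1 + s / t) - 1 = ω - (1 + ω) * s / (s + t) := by
      field_simp
      ring
    linarith [heq ▸ hlog]
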